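/- arXiv:2201.07119 — 2 statements merged into one kernel-verified Lean document; each statement's English description precedes it below -/
import Mathlib

section
/- The dual of a GRS code is a GRS code: GRS_{n,k}(alpha,beta)^perp = GRS_{n,n-k}(alpha,gamma), where gamma_i = beta_i^{-1} * prod_{j != i} (alpha_i - alpha_j)^{-1}. -/
/-!
With `wᵢ = ∏_{j≠i} (αᵢ - αⱼ)⁻¹` the Lagrange nodal weights, `∑ᵢ wᵢ P(αᵢ)` is the coefficient of
`X^(n-1)` of any `P` of degree `< n`. Since `βᵢ γᵢ = wᵢ`, the inner product of the codewords of
`f ∈ F[X]_{<k}` and `g ∈ F[X]_{<n-k}` is `∑ᵢ wᵢ (fg)(αᵢ)`, which vanishes because `deg fg ≤ n - 2`.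
So `GRS_{n,n-k}(α,γ)` lies in the dual, and the two have the same dimension `n - k`: evaluation at
`n` distinct points is injective on polynomials of degree `< n`.
-/

open Polynomial

/-- The evaluation map `f ↦ (β₁ f(α₁), …, βₙ f(αₙ))` as a linear map. -/
noncomputable def grsEval {F : Type*} [Field F] {n : ℕ} (α β : Fin n → F) :
    F[X] →ₗ[F] (Fin n → F) where
  toFun f := fun i => β i * f.eval (α i)
  map_add' f g := by funext i; simp [mul_add]
  map_smul' c f := by funext i; simp [smul_eq_mul]; ring

/-- The generalized Reed–Solomon code `GRS_{n,k}(α,β)`. -/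
noncomputable def GRSCode {F : Type*} [Field F] {n : ℕ} (α β : Fin n → F) (k : ℕ) :
    Submodule F (Fin n → F) :=
  Submodule.map (grsEval α β) (Polynomial.degreeLT F k)

open Finset Module

theorem Polynomial.mul_mem_degreeLT {R : Type*} [Semiring R] {f g : R[X]} {a b : ℕ}
    (hf : f ∈ degreeLT R a) (hg : g ∈ degreeLT R b) : f * g ∈ degreeLT R (a + b - 1) := by
  by_cases hfg : f * g = 0
  · rw [hfg]
    exact zero_mem _
  have hf0 : f ≠ 0 := left_ne_zero_of_mul hfg
  have hg0 : g ≠ 0 := right_ne_zero_of_mul hfg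
  rw [mem_degreeLT, ← natDegree_lt_iff_degree_lt hf0] at hf
  rw [mem_degreeLT, ← natDegree_lt_iff_degree_lt hg0] at hg
  rw [mem_degreeLT, ← natDegree_lt_iff_degree_lt hfg]
  have := natDegree_mul_le (p := f) (q := g)
  omega

theorem Lagrange.sum_nodalWeight_mul_eval_eq_zero {F ι : Type*} [Field F] [DecidableEq ι]
    {s : Finset ι} {v : ι → F} (hvs : Set.InjOn v s) {P : F[X]} (hP : P.degree < ↑(#s - 1)) :
    ∑ i ∈ s, nodalWeight s v i * P.eval (v i) = 0 := by
  have hcoeff := coeff_eq_sum hvs (hP.trans_le (by exact_mod_cast Nat.sub_le _ _))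
  rw [coeff_eq_zero_of_degree_lt hP] at hcoeff
  rw [hcoeff]
  refine sum_congr rfl fun i _ => ?_
  rw [nodalWeight, prod_inv_distrib, div_eq_inv_mul]

section GRS

variable {F : Type*} [Field F] {n : ℕ} {α β γ : Fin n → F}

theorem grsEval_apply (f : F[X]) (i : Fin n) : grsEval α β f i = β i * f.eval (α i) := rfl

theorem eq_zero_of_grsEval_eq_zero (hα : Function.Injective α) (hβ : ∀ i, β i ≠ 0) {m : ℕ}
    (hm : m ≤ n) {f : F[X]} (hf : f ∈ degreeLT F m) (h0 : grsEval α β f = 0) : f = 0 := by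
  refine eq_zero_of_degree_lt_of_eval_index_eq_zero univ hα.injOn ?_ fun i _ => ?_
  · rw [card_univ, Fintype.card_fin]
    exact (mem_degreeLT.mp hf).trans_le (by exact_mod_cast hm)
  · have := congrFun h0 i
    rw [grsEval_apply, Pi.zero_apply] at this
    exact (mul_eq_zero.mp this).resolve_left (hβ i)

theorem GRSCode.finrank_eq (hα : Function.Injective α) (hβ : ∀ i, β i ≠ 0) {m : ℕ}
    (hm : m ≤ n) : finrank F (GRSCode α β m) = m := by
  have hinj : Function.Injective ((grsEval α β).comp (degreeLT F m).subtype) := by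
    rw [← LinearMap.ker_eq_bot, LinearMap.ker_eq_bot']
    exact fun f hf => Subtype.ext (eq_zero_of_grsEval_eq_zero hα hβ hm f.2 hf)
  rw [GRSCode, ← Submodule.range_subtype (degreeLT F m), ← LinearMap.range_comp,
    LinearMap.finrank_range_of_inj hinj, (degreeLTEquiv F m).finrank_eq, finrank_fin_fun]

theorem GRSCode.sum_mul_eq_zero (hα : Function.Injective α)
    (hγβ : ∀ i, γ i * β i = Lagrange.nodalWeight univ α i) {k m : ℕ} (hkm : k + m ≤ n)
    {x y : Fin n → F} (hx : x ∈ GRSCode α γ m) (hy : y ∈ GRSCode α β k) :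
    ∑ i, x i * y i = 0 := by
  obtain ⟨g, hg, rfl⟩ := hx
  obtain ⟨f, hf, rfl⟩ := hy
  have hgf : (g * f).degree < ↑(#(univ : Finset (Fin n)) - 1) := by
    refine (mem_degreeLT.mp (mul_mem_degreeLT hg hf)).trans_le ?_
    rw [card_univ, Fintype.card_fin]
    exact_mod_cast (by omega : m + k - 1 ≤ n - 1)
  calc ∑ i, grsEval α γ g i * grsEval α β f i
      = ∑ i, Lagrange.nodalWeight univ α i * (g * f).eval (α i) := by
        refine sum_congr rfl fun i _ => ?_
        rw [grsEval_apply, grsEval_apply, eval_mul, ← hγβ]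
        ring
    _ = 0 := Lagrange.sum_nodalWeight_mul_eval_eq_zero hα.injOn hgf

end GRS

theorem GRS_dual_general (n k : ℕ) (F : Type*) [Field F] (hkn : k ≤ n)
    (α β : Fin n → F) (hα : Function.Injective α) (hβ : ∀ i, β i ≠ 0) :
    {x : Fin n → F | ∀ y ∈ GRSCode α β k, ∑ i, x i * y i = 0} =
      ↑(GRSCode α
          (fun i => (β i)⁻¹ * (∏ j ∈ Finset.univ.erase i, (α i - α j))⁻¹) (n - k)) := by
  set γ : Fin n → F := fun i => (β i)⁻¹ * (∏ j ∈ Finset.univ.erase i, (α i - α j))⁻¹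
  have hγβ : ∀ i, γ i * β i = Lagrange.nodalWeight univ α i := fun i => by
    rw [Lagrange.nodalWeight, prod_inv_distrib, mul_right_comm, inv_mul_cancel₀ (hβ i), one_mul]
  have hγ : ∀ i, γ i ≠ 0 := fun i h => Lagrange.nodalWeight_ne_zero hα.injOn (mem_univ i)
    (by rw [← hγβ, h, zero_mul])
  set B := Matrix.toBilin' (1 : Matrix (Fin n) (Fin n) F)
  have hB : B.Nondegenerate :=
    LinearMap.BilinForm.nondegenerate_toBilin'_of_det_ne_zero' 1 (by simp)
  have hB_apply : ∀ x y, B x y = ∑ i, y i * x i := fun x y => by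
    simp [B, Matrix.toBilin'_apply', dotProduct, mul_comm]
  have hle : GRSCode α γ (n - k) ≤ B.orthogonal (GRSCode α β k) := fun x hx =>
    LinearMap.BilinForm.mem_orthogonal_iff.mpr fun y hy => by
      rw [hB_apply]
      exact GRSCode.sum_mul_eq_zero hα hγβ (by omega) hx hy
  have heq : B.orthogonal (GRSCode α β k) = GRSCode α γ (n - k) := by
    refine (Submodule.eq_of_le_of_finrank_le hle ?_).symm
    rw [LinearMap.BilinForm.finrank_orthogonal hB, GRSCode.finrank_eq hα hβ hkn,
      GRSCode.finrank_eq hα hγ (Nat.sub_le n k), finrank_fin_fun]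
  ext x
  simp only [← heq, Set.mem_ofPred_eq, SetLike.mem_coe, LinearMap.BilinForm.mem_orthogonal_iff,
    hB_apply]

/-- The dual of a GRS code is a GRS code:
`GRS_{n,k}(α,β)^⊥ = GRS_{n,n-k}(α,γ)` with `γᵢ = βᵢ⁻¹ ∏_{j≠i} (αᵢ - αⱼ)⁻¹`. -/
theorem GRS_dual (q n k : ℕ) (F : Type*) [Field F] [Fintype F]
    (hq : Fintype.card F = q) (hk1 : 1 ≤ k) (hkn : k ≤ n) (hnq : n ≤ q)
    (α β : Fin n → F) (hα : Function.Injective α) (hβ : ∀ i, β i ≠ 0) :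
    {x : Fin n → F | ∀ y ∈ GRSCode α β k, ∑ i, x i * y i = 0} =
      ↑(GRSCode α
          (fun i => (β i)⁻¹ * (∏ j ∈ Finset.univ.erase i, (α i - α j))⁻¹) (n - k)) :=
  GRS_dual_general n k F hkn α β hα hβ
end

section
/- The binary Reed-Muller code RM_2(m,r) with r <= m has minimum Hamming distance exactly 2^{m-r}. -/
/-- Evaluation of multivariate polynomials at all points, as a linear map. -/
noncomputable def mvEval (F : Type*) [CommRing F] (m : ℕ) :
    MvPolynomial (Fin m) F →ₗ[F] ((Fin m → F) → F) where
  toFun p := fun x => MvPolynomial.eval x p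
  map_add' p q := by funext x; simp
  map_smul' c p := by funext x; simp

/-- The binary Reed–Muller code `RM₂(m,r)`: evaluations on `F₂^m` of polynomials
of total degree at most `r`. -/
noncomputable def RMCode (m r : ℕ) : Submodule (ZMod 2) ((Fin m → ZMod 2) → ZMod 2) :=
  Submodule.map (mvEval (ZMod 2) m) (MvPolynomial.restrictTotalDegree (Fin m) (ZMod 2) r)


open MvPolynomial Finset

lemma zmod2_cases (a : ZMod 2) : a = 0 ∨ a = 1 := by revert a; decide

lemma zmod2_ne_zero {a : ZMod 2} : a ≠ 0 ↔ a = 1 := by revert a; decide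

lemma wt_triangle {ι : Type*} [Fintype ι] (g0 g1 : ι → ZMod 2) :
    hammingNorm (fun x => g0 x + g1 x) ≤ hammingNorm g0 + hammingNorm g1 := by
  classical
  simp only [hammingNorm]
  calc #(filter (fun i => g0 i + g1 i ≠ 0) univ)
      ≤ #(filter (fun i => g0 i ≠ 0) univ ∪ filter (fun i => g1 i ≠ 0) univ) := by
        apply Finset.card_le_card
        intro x hx
        simp only [Finset.mem_filter, Finset.mem_union, Finset.mem_univ, true_and] at hx ⊢
        by_contra hc
        push_neg at hc
        simp [hc.1, hc.2] at hx
    _ ≤ _ := Finset.card_union_le _ _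

lemma wt_split {m : ℕ} (f : (Fin (m+1) → ZMod 2) → ZMod 2) :
    hammingNorm f = hammingNorm (fun x => f (Fin.cons 0 x)) +
      hammingNorm (fun x => f (Fin.cons 1 x)) := by
  classical
  simp only [hammingNorm]
  have key : ∀ a : ZMod 2,
      #(filter (fun y : Fin (m+1) → ZMod 2 => f y ≠ 0 ∧ y 0 = a) univ) =
      #(filter (fun x : Fin m → ZMod 2 => f (Fin.cons a x) ≠ 0) univ) := by
    intro a
    apply Finset.card_bij (fun y _ => Fin.tail y)
    · intro y hy
      simp only [Finset.mem_filter, Finset.mem_univ, true_and] at hy ⊢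
      rw [← hy.2, Fin.cons_self_tail]
      exact hy.1
    · intro y1 h1 y2 h2 heq
      simp only [Finset.mem_filter, Finset.mem_univ, true_and] at h1 h2
      funext i
      refine Fin.cases ?_ ?_ i
      · rw [h1.2, h2.2]
      · intro j; exact congrFun heq j
    · intro x hx
      simp only [Finset.mem_filter, Finset.mem_univ, true_and] at hx
      exact ⟨Fin.cons a x, by simp [Finset.mem_filter, hx, Fin.cons_zero], by
        simp [Fin.tail_cons]⟩
  have split : #(filter (fun y : Fin (m+1) → ZMod 2 => f y ≠ 0) univ) =
      #(filter (fun y : Fin (m+1) → ZMod 2 => f y ≠ 0 ∧ y 0 = 0) univ) +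
      #(filter (fun y : Fin (m+1) → ZMod 2 => f y ≠ 0 ∧ y 0 = 1) univ) := by
    have h2 := Finset.card_filter_add_card_filter_not
      (s := filter (fun y : Fin (m+1) → ZMod 2 => f y ≠ 0) univ)
      (p := fun y => y 0 = 0)
    rw [Finset.filter_filter, Finset.filter_filter] at h2
    rw [← h2]
    congr 2
    apply Finset.filter_congr
    intro y _
    have := zmod2_ne_zero (a := y 0)
    tauto
  rw [split, key 0, key 1]

lemma RM_lower : ∀ m r, r ≤ m → ∀ p : MvPolynomial (Fin m) (ZMod 2),
    p.totalDegree ≤ r → (fun x => MvPolynomial.eval x p) ≠ 0 →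
    2 ^ (m - r) ≤ hammingNorm (fun x => MvPolynomial.eval x p) := by
  intro m
  induction m with
  | zero =>
    intro r hr p hd hne
    have : r = 0 := Nat.le_zero.mp hr
    subst this
    simpa using Nat.one_le_iff_ne_zero.mpr (hammingNorm_ne_zero_iff.mpr hne)
  | succ m IH =>
    intro r hr p hd hne
    by_cases hrm : r = m + 1
    · subst hrm
      simpa [Nat.sub_self] using Nat.one_le_iff_ne_zero.mpr (hammingNorm_ne_zero_iff.mpr hne)
    have hrle : r ≤ m := by omega
    set P := finSuccEquiv (ZMod 2) m p with hP
    set q0 := P.coeff 0 with hq0def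
    set h := ∑ i ∈ Finset.range P.natDegree, P.coeff (i+1) with hhdef
    have hcoeff : ∀ i : ℕ, P.coeff (i+1) ≠ 0 → (P.coeff (i+1)).totalDegree + (i+1) ≤ r :=
      fun i hi => le_trans (totalDegree_coeff_finSuccEquiv_add_le p (i+1) hi) hd
    have hq0 : q0.totalDegree ≤ r := by
      by_cases h0 : q0 = 0
      · simp [h0]
      · simpa using le_trans (totalDegree_coeff_finSuccEquiv_add_le p 0 h0) hd
    have hh : h.totalDegree ≤ r - 1 := by
      apply totalDegree_finsetSum_le
      intro i _
      by_cases h0 : P.coeff (i+1) = 0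
      · simp [h0]
      · have := hcoeff i h0; omega
    have hr1 : h ≠ 0 → 1 ≤ r := by
      intro hne0
      by_contra hc
      push_neg at hc
      interval_cases r
      apply hne0
      apply Finset.sum_eq_zero
      intro i _
      by_contra h0
      have := hcoeff i h0
      omega
    have hg : ∀ (a : ZMod 2) x, eval (Fin.cons a x) p = Polynomial.eval a (P.map (eval x)) :=
      fun a x => eval_eq_eval_mv_eval' x a p
    have hg0 : ∀ x, eval (Fin.cons (0:ZMod 2) x) p = eval x q0 := by
      intro x
      rw [hg, Polynomial.eval_zero_map]
      rw [← Polynomial.coeff_zero_eq_eval_zero]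
    have hsum : P.eval 1 = q0 + h := by
      rw [Polynomial.eval_eq_sum_range]
      simp only [one_pow, mul_one]
      rw [Finset.sum_range_succ']
      rw [add_comm]
    have hg1 : ∀ x, eval (Fin.cons (1:ZMod 2) x) p = eval x q0 + eval x h := by
      intro x
      rw [hg, Polynomial.eval_one_map, hsum, map_add]
    -- weight split
    have hsplit := wt_split (fun y => eval y p)
    rw [funext hg0] at hsplit
    rw [funext hg1] at hsplit
    by_cases hzero : (fun x => eval x h) = (0 : (Fin m → ZMod 2) → ZMod 2)
    · -- h evaluates to zero, so the two halves coincide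
      have heq : (fun x => eval x q0 + eval x h) = fun x => eval x q0 := by
        funext x
        have : eval x h = 0 := congrFun hzero x
        rw [this, add_zero]
      rw [heq] at hsplit
      have hq0ne : (fun x => eval x q0) ≠ 0 := by
        intro hc
        apply hne
        funext y
        have hy : y = Fin.cons (y 0) (Fin.tail y) := (Fin.cons_self_tail y).symm
        rcases zmod2_cases (y 0) with h0 | h0
        · rw [hy, h0, hg0]
          exact congrFun hc _
        · rw [hy, h0, hg1]
          have := congrFun hc (Fin.tail y)
          have h2 := congrFun hzero (Fin.tail y)
          simp only [Pi.zero_apply] at this h2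
          simp [this, h2]
      have hIH := IH r hrle q0 hq0 hq0ne
      have : 2 ^ (m + 1 - r) = 2 ^ (m - r) + 2 ^ (m - r) := by
        have : m + 1 - r = (m - r) + 1 := by omega
        rw [this, pow_succ]
        ring
      rw [hsplit, this]
      exact Nat.add_le_add hIH hIH
    · -- eval h ≠ 0
      have hne0 : h ≠ 0 := by
        intro hc
        apply hzero
        funext x
        simp [hc]
      have h1r := hr1 hne0
      have hIH := IH (r-1) (by omega) h hh hzero
      have htri := wt_triangle (fun x => eval x q0) (fun x => eval x q0 + eval x h)
      have hcan : (fun x => (eval x) q0 + ((eval x) q0 + (eval x) h)) = fun x => (eval x) h := by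
        funext x
        have : ∀ a b : ZMod 2, a + (a + b) = b := by decide
        exact this _ _
      rw [hcan] at htri
      have hexp : 2 ^ (m + 1 - r) = 2 ^ (m - (r - 1)) := by
        congr 1
        omega
      rw [hexp, hsplit]
      exact le_trans hIH htri

lemma card_S (m r : ℕ) (hrm : r ≤ m) :
    #(Finset.univ.filter (fun i : Fin m => (i : ℕ) < r)) = r := by
  rw [← Finset.card_range r]
  apply Finset.card_bij (fun (i : Fin m) _ => (i : ℕ))
  · intro i hi
    simp only [Finset.mem_filter, Finset.mem_univ, true_and] at hi
    simpa using hi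
  · intro i1 h1 i2 h2 heq
    exact Fin.val_injective heq
  · intro k hk
    refine ⟨⟨k, lt_of_lt_of_le (Finset.mem_range.mp hk) hrm⟩, ?_, rfl⟩
    simpa using Finset.mem_range.mp hk

lemma wt_monomial (m r : ℕ) (hrm : r ≤ m) :
    hammingNorm (fun x : Fin m → ZMod 2 =>
      ∏ i ∈ Finset.univ.filter (fun i : Fin m => (i : ℕ) < r), x i) = 2 ^ (m - r) := by
  classical
  set S := Finset.univ.filter (fun i : Fin m => (i : ℕ) < r) with hS
  simp only [hammingNorm]
  rw [← Fintype.card_subtype]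
  have e : {x : Fin m → ZMod 2 // (∏ i ∈ S, x i) ≠ 0} ≃ ({i : Fin m // i ∉ S} → ZMod 2) :=
    { toFun := fun x j => x.1 j.1
      invFun := fun y => ⟨fun i => if h : i ∈ S then 1 else y ⟨i, h⟩, by
        rw [Finset.prod_ne_zero_iff]
        intro i hi
        simp only [dif_pos hi]
        exact one_ne_zero⟩
      left_inv := fun x => by
        ext i
        by_cases h : i ∈ S
        · simp only [dif_pos h]
          exact (zmod2_ne_zero.mp (Finset.prod_ne_zero_iff.mp x.2 i h)).symm
        · simp only [dif_neg h]
      right_inv := fun y => by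
        funext j
        simp only [dif_neg j.2] }
  rw [Fintype.card_congr e, Fintype.card_fun]
  have hcard : Fintype.card {i : Fin m // i ∉ S} = m - r := by
    rw [Fintype.card_subtype_compl, Fintype.card_coe, Fintype.card_fin, hS, card_S m r hrm]
  rw [hcard, ZMod.card]

/-- The binary Reed–Muller code `RM₂(m,r)` with `r ≤ m` has minimum Hamming
distance exactly `2^{m-r}`. -/
theorem RM_min_distance (m r : ℕ) (hrm : r ≤ m) :
    sInf {w : ℕ | ∃ c ∈ RMCode m r, c ≠ 0 ∧ hammingNorm c = w} = 2 ^ (m - r) := by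
  classical
  set S := Finset.univ.filter (fun i : Fin m => (i : ℕ) < r) with hS
  set p₀ : MvPolynomial (Fin m) (ZMod 2) := ∏ i ∈ S, MvPolynomial.X i with hp₀
  set c₀ : (Fin m → ZMod 2) → ZMod 2 := mvEval (ZMod 2) m p₀ with hc₀
  have hc₀eq : c₀ = fun x => ∏ i ∈ S, x i := by
    funext x
    simp [hc₀, mvEval, hp₀, MvPolynomial.eval_prod]
  have hmem : c₀ ∈ RMCode m r := by
    refine ⟨p₀, ?_, rfl⟩
    rw [SetLike.mem_coe, MvPolynomial.mem_restrictTotalDegree]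
    refine le_trans (MvPolynomial.totalDegree_finset_prod _ _) ?_
    calc ∑ i ∈ S, (MvPolynomial.X i : MvPolynomial (Fin m) (ZMod 2)).totalDegree
        = ∑ _i ∈ S, 1 := by simp [MvPolynomial.totalDegree_X]
      _ = S.card := by simp
      _ = r := by rw [hS]; exact card_S m r hrm
      _ ≤ r := le_rfl
  have hc₀ne : c₀ ≠ 0 := by
    intro hzero
    have h1 := congrFun hzero (fun _ => 1)
    rw [hc₀eq] at h1
    simp at h1
  have hwt : hammingNorm c₀ = 2 ^ (m - r) := by
    rw [hc₀eq, hS]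
    exact wt_monomial m r hrm
  apply le_antisymm
  · exact Nat.sInf_le ⟨c₀, hmem, hc₀ne, hwt⟩
  · refine le_csInf ⟨2 ^ (m - r), ⟨c₀, hmem, hc₀ne, hwt⟩⟩ ?_
    rintro w ⟨c, ⟨p, hp, rfl⟩, hcne, rfl⟩
    rw [SetLike.mem_coe, MvPolynomial.mem_restrictTotalDegree] at hp
    exact RM_lower m r hrm p hp hcne
end
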